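/- Let [b,i] and [b',i] be intervals in the homology or boundary barcode of a simplex-wise zigzag filtration F_i with b ≺ b', and suppose wire bundles W and W' generate representatives for [b,i] and [b',i] respectively. If b < b', then the bundle W ⊞ W' (symmetric difference) generates the representative rep ⊞ rep', where rep and rep' are the representatives generated by W and W'; hence W ⊞ W' generates a representative for [b',i]. -/

import Mathlib

/-- A simplex is a finite set of (natural-number) vertices. -/
abbrev Simplex : Type := Finset ℕ

/-- A chain over ℤ/2 (all degrees together) is a finitely supported
function from simplices to ℤ/2. -/
abbrev Chain : Type := Simplex →₀ ZMod 2

/-- A (finite) simplicial complex: a finite set of simplices closed under faces. -/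
def IsComplex (K : Finset Simplex) : Prop := ∀ s ∈ K, ∀ t ⊆ s, t ∈ K

/-- Boundary of a single simplex over ℤ/2. -/
noncomputable def bdrySimplex (s : Simplex) : Chain :=
  ∑ x ∈ s, Finsupp.single (s.erase x) 1

/-- The boundary operator on chains (all degrees), over ℤ/2. -/
noncomputable def bdry : Chain →ₗ[ZMod 2] Chain :=
  Finsupp.lsum (ZMod 2) fun s => LinearMap.toSpanSingleton (ZMod 2) Chain (bdrySimplex s)

/-- The chain group of a complex `K`: chains supported on `K`. -/
noncomputable def chainsOf (K : Finset Simplex) : Submodule (ZMod 2) Chain :=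
  Finsupp.supported (ZMod 2) (ZMod 2) (↑K : Set Simplex)

/-- The cycle group `Z(K)` (all degrees). -/
noncomputable def cyclesOf (K : Finset Simplex) : Submodule (ZMod 2) Chain :=
  chainsOf K ⊓ LinearMap.ker bdry

/-- The boundary group `B(K)` (all degrees). -/
noncomputable def bdriesOf (K : Finset Simplex) : Submodule (ZMod 2) Chain :=
  Submodule.map bdry (chainsOf K)

theorem chainsOf_mono {K K' : Finset Simplex} (h : K ⊆ K') : chainsOf K ≤ chainsOf K' :=
  Finsupp.supported_mono (by exact_mod_cast h)

theorem cyclesOf_mono {K K' : Finset Simplex} (h : K ⊆ K') : cyclesOf K ≤ cyclesOf K' :=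
  inf_le_inf_right _ (chainsOf_mono h)

theorem bdriesOf_mono {K K' : Finset Simplex} (h : K ⊆ K') : bdriesOf K ≤ bdriesOf K' :=
  Submodule.map_mono (chainsOf_mono h)

/-- `B(K)` viewed inside `Z(K)`. -/
noncomputable def homologyRel (K : Finset Simplex) : Submodule (ZMod 2) (cyclesOf K) :=
  (bdriesOf K).comap (cyclesOf K).subtype

/-- The homology `H(K) = Z(K)/B(K)` over ℤ/2, all degrees summed. -/
noncomputable abbrev homology (K : Finset Simplex) :=
  cyclesOf K ⧸ homologyRel K

/-- The inclusion-induced map on homology. -/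
noncomputable def inducedH {K K' : Finset Simplex} (h : K ⊆ K') :
    homology K →ₗ[ZMod 2] homology K' :=
  Submodule.mapQ _ _ (Submodule.inclusion (cyclesOf_mono h)) (by
    intro x hx
    simp only [homologyRel, Submodule.mem_comap, Submodule.coe_subtype,
      Submodule.coe_inclusion] at hx ⊢
    exact bdriesOf_mono h hx)

open Classical in
/-- The homology class of a chain (zero if the chain is not a cycle of `K`). -/
noncomputable def hclass (K : Finset Simplex) (c : Chain) : homology K :=
  if h : c ∈ cyclesOf K then Submodule.Quotient.mk ⟨c, h⟩ else 0

/-- A simplex-wise zigzag filtration of length `m` starting at the empty complex: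
each arrow inserts or deletes exactly one simplex. -/
structure ZZ (m : ℕ) where
  K : ℕ → Finset Simplex
  cpx : ∀ j, IsComplex (K j)
  empty0 : K 0 = ∅
  step : ∀ j < m, (∃ σ, σ ∉ K j ∧ K (j+1) = insert σ (K j)) ∨
                  (∃ σ, σ ∉ K (j+1) ∧ K j = insert σ (K (j+1)))

/-- Homology representative for the interval `[b,d]` of the zigzag module of `F_i`
(Definition of homology representatives). -/
def IsHRep {m : ℕ} (F : ZZ m) (i b d : ℕ) (z : ℕ → Chain) : Prop :=
  1 ≤ b ∧ b ≤ d ∧ d ≤ i ∧ i ≤ m ∧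
  (∀ α, b ≤ α → α ≤ d → z α ∈ cyclesOf (F.K α)) ∧
  (∀ α, b ≤ α → α < d →
    (F.K α ⊆ F.K (α+1) → z α + z (α+1) ∈ bdriesOf (F.K (α+1))) ∧
    (F.K (α+1) ⊆ F.K α → z α + z (α+1) ∈ bdriesOf (F.K α))) ∧
  ((F.K (b-1) ⊆ F.K b → z b ∉ cyclesOf (F.K (b-1))) ∧
   (F.K b ⊆ F.K (b-1) → z b ∈ bdriesOf (F.K (b-1)) ∧ z b ∉ bdriesOf (F.K b))) ∧
  (d < i →
    (F.K (d+1) ⊆ F.K d → z d ∉ cyclesOf (F.K (d+1))) ∧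
    (F.K d ⊆ F.K (d+1) → z d ∈ bdriesOf (F.K (d+1)) ∧ z d ∉ bdriesOf (F.K d)))

/-- Boundary representative for the interval `[b,d]` of the boundary zigzag module of `F_i`. -/
def IsBRep {m : ℕ} (F : ZZ m) (i b d : ℕ) (z : ℕ → Chain) : Prop :=
  1 ≤ b ∧ b ≤ d ∧ d ≤ i ∧ i ≤ m ∧
  (∀ α, b ≤ α → α ≤ d → z α ∈ bdriesOf (F.K α)) ∧
  (∀ α, b ≤ α → α < d → z (α+1) = z α) ∧
  (F.K (b-1) ⊆ F.K b ∧ z b ∉ bdriesOf (F.K (b-1))) ∧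
  (d < i → F.K (d+1) ⊆ F.K d ∧ z d ∉ bdriesOf (F.K (d+1)))

/-- `j ∈ P^H(F_i)`: homology birth index. -/
def HBirthAt {m : ℕ} (F : ZZ m) (i j : ℕ) : Prop :=
  1 ≤ j ∧ j ≤ i ∧ i ≤ m ∧
  ((∃ h : F.K (j-1) ⊆ F.K j, Function.Injective (inducedH h)) ∨
   (∃ h : F.K j ⊆ F.K (j-1), Function.Surjective (inducedH h)))

/-- `j ∈ P^B(F_i)`: boundary birth index. -/
def BBirthAt {m : ℕ} (F : ZZ m) (i j : ℕ) : Prop :=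
  1 ≤ j ∧ j ≤ i ∧ i ≤ m ∧ F.K (j-1) ⊆ F.K j ∧ bdriesOf (F.K (j-1)) ≠ bdriesOf (F.K j)

/-- `j ∈ N^H(F_i)` for `j < i` (the arrow at `j` kills a homology class). -/
def HDeathAt {m : ℕ} (F : ZZ m) (i j : ℕ) : Prop :=
  j < i ∧ i ≤ m ∧
  ((∃ h : F.K j ⊆ F.K (j+1), ¬ Function.Injective (inducedH h)) ∨
   (∃ h : F.K (j+1) ⊆ F.K j, ¬ Function.Surjective (inducedH h)))

/-- `j ∈ N^B(F_i)` for `j < i` (the arrow at `j` kills a boundary class). -/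
def BDeathAt {m : ℕ} (F : ZZ m) (i j : ℕ) : Prop :=
  j < i ∧ i ≤ m ∧
  ∃ _ : F.K (j+1) ⊆ F.K j, bdriesOf (F.K (j+1)) ≠ bdriesOf (F.K j)

/-- The total order `≺` on birth indices (Definition of the total order). -/
def Prec {m : ℕ} (F : ZZ m) (i b b' : ℕ) : Prop :=
  (BBirthAt F i b ∧ HBirthAt F i b') ∨
  (BBirthAt F i b ∧ BBirthAt F i b' ∧ b < b') ∨
  (HBirthAt F i b ∧ HBirthAt F i b' ∧ b < b' ∧ F.K (b'-1) ⊆ F.K b') ∨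
  (HBirthAt F i b ∧ HBirthAt F i b' ∧ b' < b ∧ F.K b ⊆ F.K (b-1))

/-- A wire at index `i` (Definition of wires). -/
def IsWire {m : ℕ} (F : ZZ m) (i : ℕ) (c : Chain) : Prop :=
  1 ≤ i ∧ i ≤ m ∧ c ∈ cyclesOf (F.K i) ∧
  ((F.K (i-1) ⊆ F.K i ∧ c ∉ cyclesOf (F.K (i-1))) ∨
   (F.K i ⊆ F.K (i-1) ∧ c ∈ bdriesOf (F.K (i-1)) ∧ c ∉ bdriesOf (F.K i)) ∨
   (F.K (i-1) ⊆ F.K i ∧ c ∈ bdriesOf (F.K i) ∧ c ∉ bdriesOf (F.K (i-1))))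

/-- Partial sum of the wires in the bundle `W` whose starting index is `≤ α`. -/
noncomputable def psum (w : ℕ → Chain) (W : Finset ℕ) (α : ℕ) : Chain :=
  ∑ j ∈ W.filter (· ≤ α), w j

/-- A boundary bundle `W` (with wires `w`) alive till index `b`. -/
def AliveTill {m : ℕ} (F : ZZ m) (w : ℕ → Chain) (W : Finset ℕ) (b : ℕ) : Prop :=
  ∀ α ≤ b, psum w W α ∈ bdriesOf (F.K α)

/-- `S` (with representatives `z`) is the homology barcode `Pers^H(F_i)`:
each interval carries a representative and, at every index `j`, the classes of the
representative cycles of the intervals containing `j` form a basis of `H(K_j)`. -/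
def IsHBarcode {m : ℕ} (F : ZZ m) (i : ℕ) (S : Finset (ℕ × ℕ))
    (z : ℕ × ℕ → ℕ → Chain) : Prop :=
  (∀ q ∈ S, IsHRep F i q.1 q.2 (z q)) ∧
  ∀ j ≤ i,
    LinearIndependent (ZMod 2)
      (fun q : {q : ℕ × ℕ // q ∈ S ∧ q.1 ≤ j ∧ j ≤ q.2} => hclass (F.K j) (z q.val j)) ∧
    Submodule.span (ZMod 2)
      (Set.range (fun q : {q : ℕ × ℕ // q ∈ S ∧ q.1 ≤ j ∧ j ≤ q.2} =>
        hclass (F.K j) (z q.val j))) = ⊤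

/-- `S` (with representatives `z`) is the boundary barcode `Pers^B(F_i)`. -/
def IsBBarcode {m : ℕ} (F : ZZ m) (i : ℕ) (S : Finset (ℕ × ℕ))
    (z : ℕ × ℕ → ℕ → Chain) : Prop :=
  (∀ q ∈ S, IsBRep F i q.1 q.2 (z q)) ∧
  ∀ j ≤ i,
    LinearIndependent (ZMod 2)
      (fun q : {q : ℕ × ℕ // q ∈ S ∧ q.1 ≤ j ∧ j ≤ q.2} => z q.val j) ∧
    Submodule.span (ZMod 2)
      (Set.range (fun q : {q : ℕ × ℕ // q ∈ S ∧ q.1 ≤ j ∧ j ≤ q.2} =>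
        z q.val j)) = bdriesOf (F.K j)

/-!
Over ℤ/2 the partial sums of `W ⊞ W'` are the index-wise sums `z + z'` of the two
representatives. On `[b', i]` this sum inherits from both summands the property of being a
sequence of cycles whose consecutive terms differ by boundaries. At the birth index `b'` the
summand `z b'` already lies in the cycles (for an insertion) or in the boundaries (for a
deletion) of the complex before `b'`, so adding it does not disturb the birth condition of `z'`.
The hypothesis `b ≺ b'` with `b < b'` excludes the only configurations where this could fail:
a homology representative cannot start at a boundary birth, so it forces `b'` to be an
insertion-type homology birth, which is neither a deletion nor a boundary birth.
-/

lemma Finset.sum_symmDiff_of_zmod_two {ι G : Type*} [DecidableEq ι] [AddCommGroup G]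
    [Module (ZMod 2) G] (A B : Finset ι) (f : ι → G) :
    ∑ j ∈ symmDiff A B, f j = ∑ j ∈ A, f j + ∑ j ∈ B, f j := by
  rw [← Finset.sum_union_inter, ← Finset.sum_sdiff (Finset.inter_subset_union (s := A) (t := B)),
    add_assoc, ZModModule.add_self, add_zero, symmDiff_eq_sup_sdiff_inf]
  rfl

lemma psum_symmDiff (w : ℕ → Chain) (W W' : Finset ℕ) :
    psum w (symmDiff W W') = psum w W + psum w W' := by
  funext α
  rw [Pi.add_apply, psum, psum, psum, ← Finset.sum_symmDiff_of_zmod_two]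
  congr 1
  ext j
  simp only [Finset.mem_filter, Finset.mem_symmDiff]
  tauto

section Boundary

variable {K : Finset Simplex} {σ : Simplex}

lemma bdry_single (s : Simplex) (a : ZMod 2) :
    bdry (Finsupp.single s a) = a • bdrySimplex s := by
  simp [bdry]

/-- Each codimension-two face `s \ {x, y}` arises twice, from `(x, y)` and from `(y, x)`. -/
lemma bdry_bdrySimplex (s : Simplex) : bdry (bdrySimplex s) = 0 := by
  simp only [bdrySimplex, map_sum, bdry_single, one_smul]
  rw [Finset.sum_sigma']
  refine Finset.sum_involution (fun p _ => ⟨p.2, p.1⟩) (fun p _ => ?_) (fun p hp _ he => ?_)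
    (fun p hp => ?_) (fun p _ => rfl)
  · rw [Finset.erase_right_comm]
    exact ZModModule.add_self _
  · simp only [Finset.mem_sigma, Finset.mem_erase] at hp
    exact hp.2.1 (congrArg Sigma.fst he)
  · simp only [Finset.mem_sigma, Finset.mem_erase] at hp ⊢
    exact ⟨hp.2.2, Ne.symm hp.2.1, hp.1⟩

lemma bdry_bdry (c : Chain) : bdry (bdry c) = 0 := by
  induction c using Finsupp.induction with
  | zero => simp
  | single_add s a f _ _ ih =>
    rw [map_add, map_add, bdry_single, map_smul, bdry_bdrySimplex, smul_zero, zero_add, ih]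

lemma bdrySimplex_mem_chainsOf (hK : IsComplex K) {s : Simplex} (hs : s ∈ K) :
    bdrySimplex s ∈ chainsOf K :=
  Submodule.sum_mem _ fun x _ =>
    Finsupp.single_mem_supported _ _ (hK s hs _ (Finset.erase_subset x s))

lemma bdriesOf_le_chainsOf (hK : IsComplex K) : bdriesOf K ≤ chainsOf K := by
  rw [bdriesOf, chainsOf, Finsupp.supported_eq_span_single, Submodule.map_span_le]
  rintro _ ⟨s, hs, rfl⟩
  rw [bdry_single, one_smul, ← Finsupp.supported_eq_span_single]
  exact bdrySimplex_mem_chainsOf hK hs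

lemma bdriesOf_le_cyclesOf (hK : IsComplex K) : bdriesOf K ≤ cyclesOf K := by
  refine le_inf (bdriesOf_le_chainsOf hK) ?_
  rintro _ ⟨c, -, rfl⟩
  exact bdry_bdry c

lemma erase_mem_chainsOf {c : Chain} (hc : c ∈ chainsOf (insert σ K)) :
    c.erase σ ∈ chainsOf K := by
  rw [chainsOf, Finsupp.mem_supported] at hc ⊢
  intro t ht
  obtain ⟨ht, hne⟩ : c t ≠ 0 ∧ t ≠ σ := by simpa [Finsupp.support_erase] using ht
  simpa [hne] using hc (Finsupp.mem_support_iff.mpr ht)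

lemma bdry_eq_smul_add_bdry_erase (σ : Simplex) (c : Chain) :
    bdry c = c σ • bdrySimplex σ + bdry (c.erase σ) := by
  conv_lhs => rw [← Finsupp.single_add_erase σ c]
  rw [map_add, bdry_single]

lemma bdrySimplex_mem_bdriesOf_insert : bdrySimplex σ ∈ bdriesOf (insert σ K) :=
  ⟨Finsupp.single σ 1, Finsupp.single_mem_supported _ _ (Finset.mem_insert_self σ K), by
    rw [bdry_single, one_smul]⟩

lemma bdriesOf_insert : bdriesOf (insert σ K) = (ZMod 2) ∙ bdrySimplex σ ⊔ bdriesOf K := by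
  refine le_antisymm ?_ (sup_le ((Submodule.span_singleton_le_iff_mem _ _).mpr
    bdrySimplex_mem_bdriesOf_insert) (bdriesOf_mono (Finset.subset_insert σ K)))
  rintro _ ⟨c, hc, rfl⟩
  rw [bdry_eq_smul_add_bdry_erase σ c]
  exact Submodule.add_mem_sup (Submodule.smul_mem _ _ (Submodule.mem_span_singleton_self _))
    ⟨c.erase σ, erase_mem_chainsOf hc, rfl⟩

lemma bdrySimplex_notMem_of_bdriesOf_ne (h : bdriesOf K ≠ bdriesOf (insert σ K)) :
    bdrySimplex σ ∉ bdriesOf K := fun hσ =>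
  h (by rw [bdriesOf_insert, sup_eq_right.mpr ((Submodule.span_singleton_le_iff_mem _ _).mpr hσ)])

lemma bdrySimplex_mem_cyclesOf (hK : IsComplex (insert σ K)) : bdrySimplex σ ∈ cyclesOf K := by
  refine ⟨Submodule.sum_mem _ fun x hx => Finsupp.single_mem_supported _ _ ?_,
    bdry_bdrySimplex σ⟩
  exact (Finset.mem_insert.mp (hK σ (Finset.mem_insert_self σ K) _ (Finset.erase_subset x σ))
    ).resolve_left (Finset.erase_ne_self.mpr hx)

lemma bdriesOf_insert_le_cyclesOf (hK : IsComplex K) (hK' : IsComplex (insert σ K)) :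
    bdriesOf (insert σ K) ≤ cyclesOf K := by
  rw [bdriesOf_insert]
  exact sup_le ((Submodule.span_singleton_le_iff_mem _ _).mpr (bdrySimplex_mem_cyclesOf hK'))
    (bdriesOf_le_cyclesOf hK)

/-- A cycle through `σ` would exhibit `∂σ` as a boundary of `K`. -/
lemma cyclesOf_insert_le (hσ : bdrySimplex σ ∉ bdriesOf K) :
    cyclesOf (insert σ K) ≤ cyclesOf K := by
  rintro z ⟨hzc, hzk⟩
  refine ⟨?_, hzk⟩
  replace hzk : bdry z = 0 := hzk
  have hzσ : z σ = 0 := by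
    rcases (show ∀ a : ZMod 2, a = 0 ∨ a = 1 by decide) (z σ) with h | h
    · exact h
    · refine absurd ⟨z.erase σ, erase_mem_chainsOf hzc, ?_⟩ hσ
      rw [bdry_eq_smul_add_bdry_erase σ, h, one_smul] at hzk
      rw [eq_neg_of_add_eq_zero_right hzk, ZModModule.neg_eq_self]
  rw [← Finsupp.erase_of_notMem_support (Finsupp.notMem_support_iff.mpr hzσ)]
  exact erase_mem_chainsOf hzc

lemma not_injective_inducedH {K' : Finset Simplex} (h : K ⊆ K') {c : Chain}
    (hc : c ∈ cyclesOf K) (hcK' : c ∈ bdriesOf K') (hcK : c ∉ bdriesOf K) :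
    ¬ Function.Injective (inducedH h) := by
  intro hinj
  have hmap : inducedH h (Submodule.Quotient.mk ⟨c, hc⟩) = inducedH h 0 := by
    rw [map_zero, inducedH, Submodule.mapQ_apply, Submodule.Quotient.mk_eq_zero]
    exact hcK'
  exact hcK ((Submodule.Quotient.mk_eq_zero (homologyRel K)).mp (hinj hmap))

end Boundary

namespace ZZ

variable {m : ℕ} (F : ZZ m) {j : ℕ}

lemma exists_insert (hj : 1 ≤ j) (hjm : j ≤ m) (h : F.K (j-1) ⊆ F.K j) :
    ∃ σ, F.K j = insert σ (F.K (j-1)) := by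
  have hstep := F.step (j-1) (by omega)
  rw [Nat.sub_add_cancel hj] at hstep
  rcases hstep with ⟨σ, -, hins⟩ | ⟨σ, hσ, hins⟩
  · exact ⟨σ, hins⟩
  · exact absurd (h (hins ▸ Finset.mem_insert_self σ _)) hσ

lemma bdriesOf_le_cyclesOf_pred (hj : 1 ≤ j) (hjm : j ≤ m) (h : F.K (j-1) ⊆ F.K j) :
    bdriesOf (F.K j) ≤ cyclesOf (F.K (j-1)) := by
  obtain ⟨σ, hins⟩ := F.exists_insert hj hjm h
  rw [hins]
  exact bdriesOf_insert_le_cyclesOf (F.cpx (j-1)) (hins ▸ F.cpx j)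

lemma cyclesOf_le_pred_of_bdriesOf_ne (hj : 1 ≤ j) (hjm : j ≤ m) (h : F.K (j-1) ⊆ F.K j)
    (hne : bdriesOf (F.K (j-1)) ≠ bdriesOf (F.K j)) :
    cyclesOf (F.K j) ≤ cyclesOf (F.K (j-1)) := by
  obtain ⟨σ, hins⟩ := F.exists_insert hj hjm h
  rw [hins] at hne ⊢
  exact cyclesOf_insert_le (bdrySimplex_notMem_of_bdriesOf_ne hne)

/-- The boundary `∂σ` of the inserted simplex is a cycle of the old complex killed by the
insertion. -/
lemma not_injective_inducedH_of_bdriesOf_ne (hj : 1 ≤ j) (hjm : j ≤ m)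
    (h : F.K (j-1) ⊆ F.K j) (hne : bdriesOf (F.K (j-1)) ≠ bdriesOf (F.K j)) :
    ¬ Function.Injective (inducedH h) := by
  obtain ⟨σ, hins⟩ := F.exists_insert hj hjm h
  rw [hins] at hne
  exact not_injective_inducedH h (bdrySimplex_mem_cyclesOf (hins ▸ F.cpx j))
    (hins ▸ bdrySimplex_mem_bdriesOf_insert) (bdrySimplex_notMem_of_bdriesOf_ne hne)

end ZZ

/-- A homology representative of `[b, d]` stripped of its birth and death conditions. -/
def IsCyclePath (K : ℕ → Finset Simplex) (b d : ℕ) (z : ℕ → Chain) : Prop :=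
  (∀ α, b ≤ α → α ≤ d → z α ∈ cyclesOf (K α)) ∧
  (∀ α, b ≤ α → α < d →
    (K α ⊆ K (α+1) → z α + z (α+1) ∈ bdriesOf (K (α+1))) ∧
    (K (α+1) ⊆ K α → z α + z (α+1) ∈ bdriesOf (K α)))

namespace IsCyclePath

variable {K : ℕ → Finset Simplex} {b d : ℕ} {z z' : ℕ → Chain}

lemma mono (hz : IsCyclePath K b d z) {b' : ℕ} (hbb' : b ≤ b') : IsCyclePath K b' d z :=
  ⟨fun α h1 h2 => hz.1 α (by omega) h2, fun α h1 h2 => hz.2 α (by omega) h2⟩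

lemma add (hz : IsCyclePath K b d z) (hz' : IsCyclePath K b d z') :
    IsCyclePath K b d (z + z') := by
  refine ⟨fun α h1 h2 => add_mem (hz.1 α h1 h2) (hz'.1 α h1 h2), fun α h1 h2 => ?_⟩
  simp only [Pi.add_apply]
  rw [add_add_add_comm (z α)]
  exact ⟨fun h => add_mem ((hz.2 α h1 h2).1 h) ((hz'.2 α h1 h2).1 h),
    fun h => add_mem ((hz.2 α h1 h2).2 h) ((hz'.2 α h1 h2).2 h)⟩

lemma mem_cyclesOf_pred {m : ℕ} {F : ZZ m} (hz : IsCyclePath F.K b d z) {α : ℕ}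
    (hbα : b < α) (hαd : α ≤ d) (hαm : α ≤ m) (h : F.K (α-1) ⊆ F.K α) :
    z α ∈ cyclesOf (F.K (α-1)) := by
  have hstep := (hz.2 (α-1) (by omega) (by omega)).1
  rw [Nat.sub_add_cancel (by omega : 1 ≤ α)] at hstep
  exact (Submodule.add_mem_iff_right _ (hz.1 (α-1) (by omega) (by omega))).mp
    (F.bdriesOf_le_cyclesOf_pred (by omega) hαm h (hstep h))

end IsCyclePath

section Representatives

variable {m : ℕ} {F : ZZ m} {i b b' d : ℕ} {z z' : ℕ → Chain}

lemma IsHRep.isCyclePath (hz : IsHRep F i b d z) : IsCyclePath F.K b d z :=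
  ⟨hz.2.2.2.2.1, hz.2.2.2.2.2.1⟩

lemma IsBRep.isCyclePath (hz : IsBRep F i b d z) : IsCyclePath F.K b d z := by
  refine ⟨fun α h1 h2 => bdriesOf_le_cyclesOf (F.cpx α) (hz.2.2.2.2.1 α h1 h2),
    fun α h1 h2 => ?_⟩
  rw [hz.2.2.2.2.2.1 α h1 h2, ZModModule.add_self]
  exact ⟨fun _ => zero_mem _, fun _ => zero_mem _⟩

lemma IsHRep.K_pred_ne (hz : IsHRep F i b d z) : F.K (b-1) ≠ F.K b := by
  obtain ⟨-, hbd, -, -, hcyc, -, ⟨hins, -⟩, -⟩ := hz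
  intro heq
  exact hins heq.subset (heq ▸ hcyc b le_rfl hbd)

lemma IsHRep.not_bBirthAt (hz : IsHRep F i b d z) : ¬ BBirthAt F i b := by
  obtain ⟨-, hbd, -, -, hcyc, -, ⟨hins, -⟩, -⟩ := hz
  rintro ⟨hb1, hbi, him, hsub, hne⟩
  exact hins hsub
    (F.cyclesOf_le_pred_of_bdriesOf_ne hb1 (by omega) hsub hne (hcyc b le_rfl hbd))

lemma IsBRep.bBirthAt (hz : IsBRep F i b d z) : BBirthAt F i b := by
  obtain ⟨hb1, hbd, hdi, him, hmem, -, ⟨hsub, hnew⟩, -⟩ := hz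
  exact ⟨hb1, by omega, him, hsub, fun heq => hnew (heq ▸ hmem b le_rfl hbd)⟩

lemma HBirthAt.not_bBirthAt (hH : HBirthAt F i b) : ¬ BBirthAt F i b := by
  rintro ⟨hb1, hbi, him, hsub, hne⟩
  rcases hH.2.2.2 with ⟨h, hinj⟩ | ⟨h, -⟩
  · exact F.not_injective_inducedH_of_bdriesOf_ne hb1 (by omega) h hne hinj
  · exact hne (by rw [Finset.Subset.antisymm hsub h])

lemma Prec.hBirthAt_of_isHRep (hprec : Prec F i b b') (hbb' : b < b') (hz : IsHRep F i b d z) :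
    HBirthAt F i b' ∧ F.K (b'-1) ⊆ F.K b' := by
  rcases hprec with ⟨hB, -⟩ | ⟨hB, -⟩ | ⟨-, hH, -, hsub⟩ | ⟨-, -, hlt, -⟩
  · exact absurd hB hz.not_bBirthAt
  · exact absurd hB hz.not_bBirthAt
  · exact ⟨hH, hsub⟩
  · omega

lemma isHRep_add (hz : IsCyclePath F.K b i z) (hz' : IsHRep F i b' i z') (hbb' : b < b')
    (hdel : F.K b' ⊆ F.K (b'-1) → z b' ∈ bdriesOf (F.K b')) :
    IsHRep F i b' i (z + z') := by
  have hpath := (hz.mono hbb'.le).add hz'.isCyclePath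
  obtain ⟨hb1, hbi, -, him, -, -, ⟨hins', hdel'⟩, -⟩ := hz'
  refine ⟨hb1, hbi, le_rfl, him, hpath.1, hpath.2, ⟨fun hsub hcyc => ?_, fun hsub => ?_⟩,
    fun h => absurd h (lt_irrefl i)⟩
  · exact hins' hsub ((Submodule.add_mem_iff_right _
      (hz.mem_cyclesOf_pred hbb' hbi (by omega) hsub)).mp hcyc)
  · obtain ⟨hmem, hnot⟩ := hdel' hsub
    have hzb := hdel hsub
    exact ⟨add_mem (bdriesOf_mono hsub hzb) hmem,
      fun h => hnot ((Submodule.add_mem_iff_right _ hzb).mp h)⟩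

lemma isBRep_add (hz : IsBRep F i b i z) (hz' : IsBRep F i b' i z') (hbb' : b < b') :
    IsBRep F i b' i (z + z') := by
  obtain ⟨-, -, -, -, hmem, hflat, -, -⟩ := hz
  obtain ⟨hb1, hbi, -, him, hmem', hflat', ⟨hsub, hnew⟩, -⟩ := hz'
  have hzb : z b' ∈ bdriesOf (F.K (b'-1)) := by
    have h := hflat (b'-1) (by omega) (by omega)
    rw [Nat.sub_add_cancel hb1] at h
    exact h ▸ hmem (b'-1) (by omega) (by omega)
  refine ⟨hb1, hbi, le_rfl, him, fun α h1 h2 => add_mem (hmem α (by omega) h2) (hmem' α h1 h2),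
    fun α h1 h2 => ?_, ⟨hsub, fun h => hnew ((Submodule.add_mem_iff_right _ hzb).mp h)⟩,
    fun h => absurd h (lt_irrefl i)⟩
  simp only [Pi.add_apply, hflat α (by omega) h2, hflat' α h1 h2]

end Representatives

theorem stmt11_general (m i b b' : ℕ) (F : ZZ m) (w : ℕ → Chain) (W W' : Finset ℕ)
    (hprec : Prec F i b b') (hbb' : b < b')
    (hW : IsHRep F i b i (psum w W) ∨ IsBRep F i b i (psum w W)) :
    (∀ α, psum w (symmDiff W W') α = psum w W α + psum w W' α) ∧
    (IsHRep F i b' i (psum w W') → IsHRep F i b' i (psum w (symmDiff W W'))) ∧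
    (IsBRep F i b' i (psum w W') → IsBRep F i b' i (psum w (symmDiff W W'))) := by
  rw [psum_symmDiff]
  refine ⟨fun α => rfl, fun hH' => ?_, fun hB' => ?_⟩
  · refine isHRep_add (hW.elim IsHRep.isCyclePath IsBRep.isCyclePath) hH' hbb' fun hdel => ?_
    rcases hW with hH | hB
    · obtain ⟨-, hins⟩ := hprec.hBirthAt_of_isHRep hbb' hH
      exact absurd (Finset.Subset.antisymm hins hdel) hH'.K_pred_ne
    · exact hB.2.2.2.2.1 b' hbb'.le hH'.2.1
  · refine isBRep_add (hW.resolve_left fun hH => ?_) hB' hbb'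
    exact (hprec.hBirthAt_of_isHRep hbb' hH).1.not_bBirthAt hB'.bBirthAt

/-- if bundles `W`, `W'` generate representatives for `[b,i]`, `[b',i]`
with `b ≺ b'` and `b < b'`, then `W ⊞ W'` generates the representative `rep ⊞ rep'`
(index-wise sum), hence a representative for `[b',i]`. -/
theorem stmt11 (m i b b' : ℕ) (F : ZZ m) (w : ℕ → Chain) (W W' : Finset ℕ)
    (hprec : Prec F i b b') (hbb' : b < b')
    (hwires : ∀ j ∈ W ∪ W', IsWire F j (w j))
    (hW : IsHRep F i b i (psum w W) ∨ IsBRep F i b i (psum w W))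
    (hW' : IsHRep F i b' i (psum w W') ∨ IsBRep F i b' i (psum w W')) :
    (∀ α, psum w (symmDiff W W') α = psum w W α + psum w W' α) ∧
    (IsHRep F i b' i (psum w W') → IsHRep F i b' i (psum w (symmDiff W W'))) ∧
    (IsBRep F i b' i (psum w W') → IsBRep F i b' i (psum w (symmDiff W W'))) :=
  stmt11_general m i b b' F w W W' hprec hbb' hW
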